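/- arXiv:2010.16225 — 2 statements merged into one kernel-verified Lean document; each statement's English description precedes it below -/
import Mathlib

section
/- Let d = 2, fix λ > 0, and let S : ℝ → ℝ be continuous on [−8λ, 0] with S(0) = 1, |S(z)| < 1 for all z ∈ [−8λ, 0), and S differentiable at 0 with S′(0) = 1. Then there exists a constant C > 0 (depending only on S and λ) such that for every integer K ≥ 2, with Δt = λ/K² and s_k = −4ΔtK²(sin²(π k₁/(2K)) + sin²(π k₂/(2K))), one has Σ_{k ∈ {1,…,K−1}²} 1/(1 − |S(s_k)|) ≤ C·Δt^{−1}·|log(λ^{−1}Δt)|. -/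
/-!
Near `0` the consistency `S'(0) = 1` gives `1 - |S s| ≥ -s/2`, and on the rest of `[-8λ, 0]`
continuity and `|S| < 1` give a positive minimum; together `1 - |S s| ≥ c · (-s)`. Jordan's
inequality `sin x ≥ 2x/π` gives `-s_k ≥ 4λ (k₁² + k₂²) / K²`, so the sum is at most
`K² / (4λc) · Σ 1 / (k₁² + k₂²)`. Summing over `k₂` first (`≤ 2 / k₁` by telescoping) leaves a
harmonic sum, which is `O(log K)`, and `|log (λ⁻¹ Δt)| = 2 log K`.
-/

open Real Filter Topology Finset

section StabilityFunction

variable {S : ℝ → ℝ} {a d : ℝ}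

lemma eventually_mul_neg_le_one_sub_abs (hS0 : S 0 = 1) (hderiv : HasDerivAt S d 0)
    (hd : 0 < d) : ∀ᶠ s in 𝓝[<] 0, d / 2 * -s ≤ 1 - |S s| := by
  have hslope : ∀ᶠ s in 𝓝[<] (0 : ℝ), d / 2 < slope S 0 s :=
    (hderiv.tendsto_slope.mono_left (nhdsLT_le_nhdsNE 0)).eventually
      (lt_mem_nhds (by linarith))
  have hpos : ∀ᶠ s in 𝓝[<] (0 : ℝ), 0 < S s :=
    nhdsWithin_le_nhds (hderiv.continuousAt.eventually (lt_mem_nhds (by rw [hS0]; exact one_pos)))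
  filter_upwards [hslope, hpos, self_mem_nhdsWithin] with s hslope hpos (hs : s < 0)
  rw [slope_def_field, hS0, sub_zero, lt_div_iff_of_neg hs] at hslope
  rw [abs_of_pos hpos]
  linarith

lemma exists_pos_mul_neg_le_one_sub_abs (ha : 0 < a) (hcont : ContinuousOn S (Set.Icc (-a) 0))
    (hS0 : S 0 = 1) (hSlt : ∀ z ∈ Set.Ico (-a) 0, |S z| < 1) (hderiv : HasDerivAt S d 0)
    (hd : 0 < d) : ∃ c > 0, ∀ s ∈ Set.Icc (-a) 0, c * -s ≤ 1 - |S s| := by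
  obtain ⟨l, hl, hnear⟩ :=
    (nhdsLT_basis (0 : ℝ)).eventually_iff.mp (eventually_mul_neg_le_one_sub_abs hS0 hderiv hd)
  set b := max l (-a)
  have hb : b < 0 := max_lt hl (by linarith)
  obtain ⟨s₀, hs₀, hmin⟩ :=
    isCompact_Icc.exists_isMinOn (Set.nonempty_Icc.mpr (le_max_right l (-a)))
      (continuousOn_const.sub (hcont.mono (Set.Icc_subset_Icc_right hb.le)).abs)
  have hm : 0 < 1 - |S s₀| := sub_pos.mpr (hSlt s₀ ⟨hs₀.1, hs₀.2.trans_lt hb⟩)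
  refine ⟨min (d / 2) ((1 - |S s₀|) / a), lt_min (by positivity) (by positivity), ?_⟩
  rintro s ⟨has, hs0⟩
  rcases le_or_gt s b with hsb | hbs
  · calc min (d / 2) ((1 - |S s₀|) / a) * -s ≤ (1 - |S s₀|) / a * a :=
          mul_le_mul (min_le_right _ _) (by linarith) (by linarith) (by positivity)
      _ = 1 - |S s₀| := div_mul_cancel₀ _ ha.ne'
      _ ≤ 1 - |S s| := hmin ⟨has, hsb⟩
  · rcases hs0.eq_or_lt with rfl | hs0
    · simp [hS0]
    · calc min (d / 2) ((1 - |S s₀|) / a) * -s ≤ d / 2 * -s :=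
          mul_le_mul_of_nonneg_right (min_le_left _ _) (by linarith)
        _ ≤ 1 - |S s| := hnear ⟨(le_max_left l (-a)).trans_lt hbs, hs0⟩

lemma one_div_one_sub_abs_le {c s t : ℝ} (hc : 0 < c) (hcS : c * -s ≤ 1 - |S s|) (ht : 0 < t)
    (hts : t ≤ -s) : 1 / (1 - |S s|) ≤ 1 / (c * t) :=
  one_div_le_one_div_of_le (by positivity) ((mul_le_mul_of_nonneg_left hts hc.le).trans hcS)

end StabilityFunction

lemma div_sq_le_sin_sq {x y : ℝ} (hx : 0 ≤ x) (hxy : x ≤ y) :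
    (x / y) ^ 2 ≤ sin (π * x / (2 * y)) ^ 2 := by
  have hy : 0 ≤ y := hx.trans hxy
  have hle : π * x / (2 * y) ≤ π / 2 := by
    rcases hy.eq_or_lt with rfl | hy
    · simp only [mul_zero, div_zero]
      positivity
    · rw [div_le_div_iff₀ (by positivity) two_pos]
      nlinarith [pi_pos]
  have h := mul_le_sin (by positivity) hle
  rw [show 2 / π * (π * x / (2 * y)) = x / y by field_simp] at h
  exact pow_le_pow_left₀ (by positivity) h 2

lemma div_sq_add_div_sq_le_sin_sq_add_sin_sq {x y K : ℝ} (hx : 0 ≤ x) (hxK : x ≤ K) (hy : 0 ≤ y)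
    (hyK : y ≤ K) :
    (x ^ 2 + y ^ 2) / K ^ 2 ≤ sin (π * x / (2 * K)) ^ 2 + sin (π * y / (2 * K)) ^ 2 := by
  rw [add_div, ← div_pow, ← div_pow]
  exact add_le_add (div_sq_le_sin_sq hx hxK) (div_sq_le_sin_sq hy hyK)

lemma one_div_one_sub_abs_le_of_sin_sq {S : ℝ → ℝ} {lam c x y K : ℝ} (hlam : 0 < lam) (hc : 0 < c)
    (hcS : ∀ s ∈ Set.Icc (-(8 * lam)) 0, c * -s ≤ 1 - |S s|) (hx : 0 < x) (hxK : x ≤ K)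
    (hy : 0 < y) (hyK : y ≤ K) :
    1 / (1 - |S (-(4 * lam * (sin (π * x / (2 * K)) ^ 2 + sin (π * y / (2 * K)) ^ 2)))|)
      ≤ K ^ 2 / (4 * lam * c) * (1 / (x ^ 2 + y ^ 2)) := by
  set σ := sin (π * x / (2 * K)) ^ 2 + sin (π * y / (2 * K)) ^ 2
  have hσ : (x ^ 2 + y ^ 2) / K ^ 2 ≤ σ :=
    div_sq_add_div_sq_le_sin_sq_add_sin_sq hx.le hxK hy.le hyK
  have hσ2 : σ ≤ 2 := (add_le_add (sin_sq_le_one _) (sin_sq_le_one _)).trans_eq one_add_one_eq_two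
  have hK : 0 < K := hx.trans_le hxK
  calc _ ≤ 1 / (c * (4 * lam * ((x ^ 2 + y ^ 2) / K ^ 2))) :=
        one_div_one_sub_abs_le hc (hcS _ ⟨by nlinarith, by nlinarith⟩) (by positivity)
          (by rw [neg_neg]; gcongr)
    _ = _ := by field_simp

lemma sum_Icc_one_div_sq_add_sq_le {a : ℝ} (ha : 0 < a) (m : ℕ) :
    ∑ k ∈ Icc 1 m, 1 / (a ^ 2 + (k : ℝ) ^ 2) ≤ 2 / a := by
  suffices h : ∑ k ∈ Icc 1 m, 1 / (a ^ 2 + (k : ℝ) ^ 2) ≤ 2 / a - 2 / (a + m) by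
    linarith [show 0 ≤ 2 / (a + m) by positivity]
  induction m with
  | zero => simp
  | succ m ih =>
    have hm : (0 : ℝ) ≤ m := m.cast_nonneg
    have hstep : 1 / (a ^ 2 + ((m : ℝ) + 1) ^ 2) ≤ 2 / (a + m) - 2 / (a + (m + 1)) := by
      rw [div_sub_div _ _ (by positivity) (by positivity), div_le_div_iff₀ (by positivity)
        (by positivity)]
      nlinarith [sq_nonneg (a - m - 1), sq_nonneg (a - m)]
    rw [sum_Icc_succ_top (by omega)]
    push_cast
    linarith

lemma sum_Icc_sum_Icc_one_div_sq_add_sq_le (n : ℕ) :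
    ∑ k₁ ∈ Icc 1 n, ∑ k₂ ∈ Icc 1 n, 1 / ((k₁ : ℝ) ^ 2 + (k₂ : ℝ) ^ 2) ≤ 2 * (1 + log n) :=
  calc ∑ k₁ ∈ Icc 1 n, ∑ k₂ ∈ Icc 1 n, 1 / ((k₁ : ℝ) ^ 2 + (k₂ : ℝ) ^ 2)
      ≤ ∑ k₁ ∈ Icc 1 n, 2 * (k₁ : ℝ)⁻¹ := by
        refine sum_le_sum fun k₁ hk₁ => ?_
        rw [← div_eq_mul_inv]
        exact sum_Icc_one_div_sq_add_sq_le (by exact_mod_cast (mem_Icc.mp hk₁).1) n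
    _ = 2 * harmonic n := by simp [← mul_sum, harmonic_eq_sum_Icc]
    _ ≤ 2 * (1 + log n) := by gcongr; exact harmonic_le_one_add_log n

lemma abs_log_inv_mul_div_sq {lam : ℝ} (hlam : lam ≠ 0) {K : ℝ} (hK : 1 ≤ K) :
    |log (lam⁻¹ * (lam / K ^ 2))| = 2 * log K := by
  rw [inv_mul_eq_div, div_div_cancel_left' hlam, log_inv, log_pow, abs_neg, Nat.cast_ofNat,
    abs_of_nonneg (mul_nonneg two_pos.le (log_nonneg hK))]

/-- 2D bound: `Σ_{k∈{1,…,K−1}²} 1/(1 − |S(s_k)|) ≤ C Δt⁻¹ |log(λ⁻¹Δt)|`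
where `Δt = λ/K²` and `s_k = −4ΔtK²(sin²(πk₁/(2K)) + sin²(πk₂/(2K)))`. -/
theorem series_bound_2d (lam : ℝ) (hlam : 0 < lam) (S : ℝ → ℝ)
    (hcont : ContinuousOn S (Set.Icc (-(8 * lam)) 0))
    (hS0 : S 0 = 1)
    (hSlt : ∀ z ∈ Set.Ico (-(8 * lam)) 0, |S z| < 1)
    (hderiv : HasDerivAt S 1 0) :
    ∃ C > 0, ∀ K : ℕ, 2 ≤ K →
      ∑ k₁ ∈ Finset.Icc 1 (K - 1), ∑ k₂ ∈ Finset.Icc 1 (K - 1),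
          1 / (1 - |S (-(4 * (lam / (K : ℝ) ^ 2) * (K : ℝ) ^ 2
            * (Real.sin (π * (k₁ : ℝ) / (2 * K)) ^ 2
              + Real.sin (π * (k₂ : ℝ) / (2 * K)) ^ 2)))|)
        ≤ C * (lam / (K : ℝ) ^ 2)⁻¹ * |Real.log (lam⁻¹ * (lam / (K : ℝ) ^ 2))| := by
  obtain ⟨c, hc, hcS⟩ :=
    exists_pos_mul_neg_le_one_sub_abs (by positivity) hcont hS0 hSlt hderiv one_pos
  refine ⟨1 / c, by positivity, fun K hK => ?_⟩
  have hK : (2 : ℝ) ≤ K := by exact_mod_cast hK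
  have hterm : ∀ k₁ ∈ Icc 1 (K - 1), ∀ k₂ ∈ Icc 1 (K - 1),
      1 / (1 - |S (-(4 * (lam / (K : ℝ) ^ 2) * (K : ℝ) ^ 2
        * (sin (π * (k₁ : ℝ) / (2 * K)) ^ 2 + sin (π * (k₂ : ℝ) / (2 * K)) ^ 2)))|)
        ≤ K ^ 2 / (4 * lam * c) * (1 / ((k₁ : ℝ) ^ 2 + (k₂ : ℝ) ^ 2)) := by
    intro k₁ hk₁ k₂ hk₂
    have hk : ∀ k ∈ Icc 1 (K - 1), (0 : ℝ) < k ∧ (k : ℝ) ≤ K := fun k hk => by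
      obtain ⟨h1, h2⟩ := mem_Icc.mp hk
      exact ⟨by exact_mod_cast h1, by exact_mod_cast h2.trans (Nat.sub_le K 1)⟩
    rw [show 4 * (lam / (K : ℝ) ^ 2) * K ^ 2 = 4 * lam by field_simp]
    exact one_div_one_sub_abs_le_of_sin_sq hlam hc hcS (hk k₁ hk₁).1 (hk k₁ hk₁).2 (hk k₂ hk₂).1
      (hk k₂ hk₂).2
  calc _ ≤ ∑ k₁ ∈ Icc 1 (K - 1), ∑ k₂ ∈ Icc 1 (K - 1),
        K ^ 2 / (4 * lam * c) * (1 / ((k₁ : ℝ) ^ 2 + (k₂ : ℝ) ^ 2)) :=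
        sum_le_sum fun k₁ hk₁ => sum_le_sum (hterm k₁ hk₁)
    _ ≤ K ^ 2 / (4 * lam * c) * (2 * (1 + log K)) := by
        simp only [← mul_sum]
        gcongr
        refine (sum_Icc_sum_Icc_one_div_sq_add_sq_le (K - 1)).trans ?_
        gcongr
        · exact Nat.cast_pos.mpr (by omega)
        · exact Nat.sub_le K 1
    _ ≤ K ^ 2 / (4 * lam * c) * (8 * log K) :=
        mul_le_mul_of_nonneg_left (by linarith [log_le_log two_pos hK, log_two_gt_d9])
          (by positivity)
    _ = 1 / c * (lam / K ^ 2)⁻¹ * |log (lam⁻¹ * (lam / K ^ 2))| := by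
        rw [abs_log_inv_mul_div_sq hlam.ne' (by linarith)]
        field_simp
        ring
end

section
/- Fix integers K ≥ 2, d ≥ 1, a real λ > 0, set Δt = λ/K², and let S : ℝ → ℝ satisfy |S(s_k)| < 1 for every multi-index k ∈ {1,…,K−1}^d. Let (Ω, F, P) be a probability space, let ε > 0, and for each m ∈ ℕ and each index i ∈ {1,…,K−1}^d let ε^m_i : Ω → ℝ be a random variable with |ε^m_i| ≤ ε almost surely and E[ε^m_i · ε^{m'}_{i'}] = 0 whenever (m, i) ≠ (m', i'). Define for each ω the random vector E^n(ω) = Σ_{m=0}^{n−1} Σ_k (2/K)^d · S(s_k)^{n−1−m} · ⟨ε^m(ω), v_k⟩ · v_k. Then for every n ≥ 1, E[‖E^n‖₂²] ≤ ε² · Σ_{k ∈ {1,…,K−1}^d} 1/(1 − S(s_k)²); equivalently, for the discrete L² norm ‖x‖_{L²} = K^{−d/2}‖x‖₂, E[‖E^n‖_{L²}²] ≤ ε² · K^{−d} Σ_k 1/(1 − S(s_k)²). -/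
open Real MeasureTheory

/-- The eigenvalue arguments `s_k = −Δt·λ_k^h` of the stability function, with
`Δt = λ/K²` and multi-index `k` with components `(k j) + 1 ∈ {1,…,K−1}`. -/
noncomputable def sVal (K d : ℕ) (lam : ℝ) (k : Fin d → Fin (K - 1)) : ℝ :=
  -(4 * (lam / (K : ℝ) ^ 2) * (K : ℝ) ^ 2
    * ∑ j, Real.sin (π * (((k j : ℕ) : ℝ) + 1) / (2 * K)) ^ 2)

/-- The discrete sine eigenvector `v_k` of the `d`-dimensional finite-difference
Laplacian: `(v_k)_i = Π_j sin(π i_j k_j / K)`. -/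
noncomputable def vVec (K d : ℕ) (k i : Fin d → Fin (K - 1)) : ℝ :=
  ∏ j, Real.sin (π * (((i j : ℕ) : ℝ) + 1) * (((k j : ℕ) : ℝ) + 1) / K)

/-! The coefficient of `E^n` on `v_k` is a linear combination, with coefficients
`(2/K)^d S(s_k)^(n-1-m) (v_k)_i`, of the pairwise uncorrelated errors `ε^m_i`. Discrete sine
orthogonality (a telescoping cosine sum) turns `‖E^n‖₂²` into `(K/2)^d` times the sum of the
squared coefficients of `E^n`, and taking expectations kills every cross term, leaving at most
`ε² Σ_k Σ_{m<n} S(s_k)^(2m)`, a geometric series in `S(s_k)² < 1`. -/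

open Finset

lemma two_mul_sin_half_mul_sum_range_cos (θ : ℝ) (K : ℕ) :
    2 * sin (θ / 2) * ∑ i ∈ range K, cos (i * θ)
      = sin ((2 * K - 1) * θ / 2) + sin (θ / 2) := by
  have hstep : ∀ i : ℕ, 2 * sin (θ / 2) * cos (i * θ)
      = sin ((2 * ((i + 1 : ℕ) : ℝ) - 1) * θ / 2) - sin ((2 * (i : ℝ) - 1) * θ / 2) := by
    intro i
    rw [sin_sub_sin]
    push_cast
    ring_nf
  rw [mul_sum, sum_congr rfl fun i _ => hstep i,
    sum_range_sub (fun i : ℕ => sin ((2 * (i : ℝ) - 1) * θ / 2))]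
  simp only [CharP.cast_eq_zero, mul_zero, zero_sub, neg_mul, one_mul, neg_div, sin_neg]
  ring

lemma sum_range_cos_pi_mul_div {K t : ℕ} (ht : 0 < t) (htK : t < 2 * K) :
    ∑ i ∈ range K, cos (π * t * i / K) = (1 - (-1) ^ t) / 2 := by
  have hK : (0 : ℝ) < K := by exact_mod_cast (show 0 < K by omega)
  set θ := π * t / K with hθ
  have hsin : sin (θ / 2) ≠ 0 := by
    refine (sin_pos_of_pos_of_lt_pi (by positivity) ?_).ne'
    rw [div_div, div_lt_iff₀ (by positivity)]
    have : (t : ℝ) < K * 2 := by exact_mod_cast (show t < K * 2 by omega)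
    nlinarith [pi_pos]
  have h := two_mul_sin_half_mul_sum_range_cos θ K
  rw [show (2 * (K : ℝ) - 1) * θ / 2 = t * π - θ / 2 by rw [hθ]; field_simp,
    sin_nat_mul_pi_sub] at h
  have harg : ∀ i : ℕ, π * t * i / K = i * θ := fun i => by ring
  simp_rw [harg]
  apply mul_left_cancel₀ (mul_ne_zero two_ne_zero hsin)
  linear_combination h

lemma sum_range_sin_mul_sin {K a b : ℕ} (ha : 0 < a) (haK : a < K) (hb : 0 < b) (hbK : b < K) :
    ∑ i ∈ range K, sin (π * i * a / K) * sin (π * i * b / K)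
      = if a = b then (K : ℝ) / 2 else 0 := by
  wlog hba : b ≤ a generalizing a b
  · convert this hb hbK ha haK (by omega) using 1
    · exact sum_congr rfl fun i _ => mul_comm _ _
    · simp only [eq_comm]
  have hprod : ∀ i : ℕ, sin (π * i * a / K) * sin (π * i * b / K)
      = (cos (π * (a - b : ℕ) * i / K) - cos (π * (a + b : ℕ) * i / K)) / 2 := by
    intro i
    rw [Nat.cast_sub hba, Nat.cast_add,
      show π * (a - b : ℝ) * i / K = π * i * a / K - π * i * b / K by ring,
      show π * (a + b : ℝ) * i / K = π * i * a / K + π * i * b / K by ring, cos_sub, cos_add]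
    ring
  have hsum : ∑ i ∈ range K, cos (π * (a + b : ℕ) * i / K) = (1 - (-1) ^ (a + b)) / 2 :=
    sum_range_cos_pi_mul_div (by omega) (by omega)
  rw [sum_congr rfl fun i _ => hprod i, ← sum_div, sum_sub_distrib, hsum]
  rcases hba.eq_or_lt with rfl | hlt
  · simp [pow_add, ← pow_two, ← pow_mul]
  · rw [sum_range_cos_pi_mul_div (by omega) (by omega), if_neg hlt.ne',
      show a + b = (a - b) + 2 * b by omega, pow_add, pow_mul]
    norm_num

lemma sum_fin_sin_mul_sin {K : ℕ} (a b : Fin (K - 1)) :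
    ∑ x : Fin (K - 1), sin (π * ((x : ℕ) + 1) * ((a : ℕ) + 1) / K)
        * sin (π * ((x : ℕ) + 1) * ((b : ℕ) + 1) / K)
      = if a = b then (K : ℝ) / 2 else 0 := by
  have hK : K - 1 + 1 = K := by have := a.isLt; omega
  have hshift := sum_range_succ'
    (fun i : ℕ => sin (π * i * (a + 1 : ℕ) / K) * sin (π * i * (b + 1 : ℕ) / K)) (K - 1)
  rw [hK, sum_range_sin_mul_sin (by omega) (by omega) (by omega) (by omega)] at hshift
  simp only [Nat.cast_zero, mul_zero, zero_mul, zero_div, sin_zero, add_zero, add_left_inj,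
    Fin.val_inj] at hshift
  rw [hshift, Fin.sum_univ_eq_sum_range (fun i : ℕ =>
    sin (π * (i + 1) * ((a : ℕ) + 1) / K) * sin (π * (i + 1) * ((b : ℕ) + 1) / K))]
  push_cast
  rfl

lemma vVec_orthogonal {K d : ℕ} (k k' : Fin d → Fin (K - 1)) :
    ∑ i, vVec K d k i * vVec K d k' i = if k = k' then ((K : ℝ) / 2) ^ d else 0 := by
  simp only [vVec, ← prod_mul_distrib]
  rw [← Fintype.prod_sum fun j (x : Fin (K - 1)) =>
    sin (π * ((x : ℕ) + 1) * ((k j : ℕ) + 1) / K) * sin (π * ((x : ℕ) + 1) * ((k' j : ℕ) + 1) / K)]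
  simp only [sum_fin_sin_mul_sin]
  split_ifs with h
  · simp [h, div_pow]
  · obtain ⟨j, hj⟩ := Function.ne_iff.mp h
    exact prod_eq_zero (mem_univ j) (if_neg hj)

lemma sum_sq_of_orthogonal {κ ι : Type*} [Fintype κ] [Fintype ι] [DecidableEq κ]
    {v : κ → ι → ℝ} {C : ℝ} (hv : ∀ k k', ∑ i, v k i * v k' i = if k = k' then C else 0)
    (c : κ → ℝ) :
    ∑ i, (∑ k, c k * v k i) ^ 2 = C * ∑ k, c k ^ 2 :=
  calc ∑ i, (∑ k, c k * v k i) ^ 2 = ∑ k, ∑ k', c k * c k' * ∑ i, v k i * v k' i := by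
        simp_rw [sq, sum_mul_sum, mul_sum]
        rw [sum_comm]
        refine sum_congr rfl fun k _ => ?_
        rw [sum_comm]
        exact sum_congr rfl fun k' _ => sum_congr rfl fun i _ => by ring
    _ = C * ∑ k, c k ^ 2 := by simp [hv, mul_sum, sq, mul_comm]

lemma integral_sq_sum_of_uncorrelated {Ω ι : Type*} [MeasurableSpace Ω] {μ : Measure Ω}
    [DecidableEq ι] {Y : ι → Ω → ℝ} (hY : ∀ j, MemLp (Y j) 2 μ)
    (huncorr : ∀ j j', j ≠ j' → ∫ ω, Y j ω * Y j' ω ∂μ = 0) (s : Finset ι) (a : ι → ℝ) :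
    ∫ ω, (∑ j ∈ s, a j * Y j ω) ^ 2 ∂μ = ∑ j ∈ s, a j ^ 2 * ∫ ω, Y j ω ^ 2 ∂μ := by
  have hint : ∀ j j', Integrable (fun ω => a j * a j' * (Y j ω * Y j' ω)) μ :=
    fun j j' => ((hY j).integrable_mul (hY j')).const_mul _
  calc ∫ ω, (∑ j ∈ s, a j * Y j ω) ^ 2 ∂μ
      = ∫ ω, ∑ j ∈ s, ∑ j' ∈ s, a j * a j' * (Y j ω * Y j' ω) ∂μ := by
        simp_rw [sq, sum_mul_sum]
        congr with ω
        exact sum_congr rfl fun j _ => sum_congr rfl fun j' _ => by ring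
    _ = ∑ j ∈ s, ∑ j' ∈ s, a j * a j' * ∫ ω, Y j ω * Y j' ω ∂μ := by
        rw [integral_finsetSum _ fun j _ => integrable_finsetSum _ fun j' _ => hint j j']
        refine sum_congr rfl fun j _ => ?_
        rw [integral_finsetSum _ fun j' _ => hint j j']
        exact sum_congr rfl fun j' _ => integral_const_mul _ _
    _ = ∑ j ∈ s, a j ^ 2 * ∫ ω, Y j ω ^ 2 ∂μ := by
        refine sum_congr rfl fun j hj => ?_
        rw [sum_eq_single_of_mem j hj fun j' _ hj' => by rw [huncorr j j' hj'.symm, mul_zero]]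
        simp only [sq]

lemma integral_sq_le_sq_of_abs_le {Ω : Type*} [MeasurableSpace Ω] {μ : Measure Ω}
    [IsProbabilityMeasure μ] {f : Ω → ℝ} {c : ℝ} (hf : AEStronglyMeasurable f μ)
    (hbdd : ∀ᵐ ω ∂μ, |f ω| ≤ c) :
    ∫ ω, f ω ^ 2 ∂μ ≤ c ^ 2 :=
  calc ∫ ω, f ω ^ 2 ∂μ ≤ ∫ _ω, c ^ 2 ∂μ := by
        refine integral_mono_ae (MemLp.of_bound hf c hbdd).integrable_sq (integrable_const _) ?_
        filter_upwards [hbdd] with ω hω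
        exact sq_le_sq' (abs_le.1 hω).1 (abs_le.1 hω).2
    _ = c ^ 2 := by simp

lemma integral_sum_sq_of_orthogonal_of_uncorrelated {Ω ι κ ι' : Type*} [MeasurableSpace Ω]
    {μ : Measure Ω} [Fintype κ] [Fintype ι] [DecidableEq κ] [DecidableEq ι']
    {v : κ → ι → ℝ} {C : ℝ} (hv : ∀ k k', ∑ i, v k i * v k' i = if k = k' then C else 0)
    {Y : ι' → Ω → ℝ} (hY : ∀ j, MemLp (Y j) 2 μ)
    (huncorr : ∀ j j', j ≠ j' → ∫ ω, Y j ω * Y j' ω ∂μ = 0) (s : Finset ι') (a : κ → ι' → ℝ) :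
    ∫ ω, ∑ i, (∑ k, (∑ j ∈ s, a k j * Y j ω) * v k i) ^ 2 ∂μ
      = C * ∑ k, ∑ j ∈ s, a k j ^ 2 * ∫ ω, Y j ω ^ 2 ∂μ := by
  have hsq : ∀ k, Integrable (fun ω => (∑ j ∈ s, a k j * Y j ω) ^ 2) μ := fun k =>
    (memLp_finsetSum s fun j _ => (hY j).const_mul (a k j)).integrable_sq
  simp_rw [sum_sq_of_orthogonal hv]
  rw [integral_const_mul, integral_finsetSum _ fun k _ => hsq k]
  simp_rw [integral_sq_sum_of_uncorrelated hY huncorr]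

lemma half_pow_mul_sum_sq_coeff_eq_geom_sum {K d : ℕ} (hK : K ≠ 0) (k : Fin d → Fin (K - 1)) (σ : ℝ) (n : ℕ) :
    ((K : ℝ) / 2) ^ d * ∑ p ∈ range n ×ˢ (univ : Finset (Fin d → Fin (K - 1))),
        ((2 / (K : ℝ)) ^ d * σ ^ (n - 1 - p.1) * vVec K d k p.2) ^ 2
      = ∑ m ∈ range n, (σ ^ 2) ^ m := by
  have hnorm : ∑ i, vVec K d k i ^ 2 = ((K : ℝ) / 2) ^ d := by
    simpa [sq] using vVec_orthogonal k k
  have hcancel : ((K : ℝ) / 2) ^ d * (2 / (K : ℝ)) ^ d = 1 := by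
    rw [← mul_pow, div_mul_div_comm, mul_comm (K : ℝ),
      div_self (mul_ne_zero two_ne_zero (Nat.cast_ne_zero.2 hK)), one_pow]
  rw [sum_product, ← sum_range_reflect (fun m => (σ ^ 2) ^ m), mul_sum]
  refine sum_congr rfl fun m _ => ?_
  simp_rw [mul_pow _ (vVec K d k _), ← mul_sum, hnorm]
  linear_combination (σ ^ (n - 1 - m)) ^ 2 * (((K : ℝ) / 2) ^ d * (2 / (K : ℝ)) ^ d + 1) * hcancel

theorem stochastic_rounding_L2_bound_general (K d : ℕ) (hK : 2 ≤ K)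
    (lam : ℝ) (S : ℝ → ℝ)
    (hS : ∀ k : Fin d → Fin (K - 1), |S (sVal K d lam k)| < 1)
    {Ω : Type*} [MeasureSpace Ω] [IsProbabilityMeasure (volume : Measure Ω)]
    (ε : ℝ)
    (eps : ℕ → (Fin d → Fin (K - 1)) → Ω → ℝ)
    (hmeas : ∀ m i, Measurable (eps m i))
    (hbdd : ∀ m i, ∀ᵐ ω, |eps m i ω| ≤ ε)
    (huncorr : ∀ m i m' i', (m, i) ≠ (m', i') →
      ∫ ω, eps m i ω * eps m' i' ω = 0)
    (E : ℕ → Ω → (Fin d → Fin (K - 1)) → ℝ)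
    (hE : ∀ n ω i, E n ω i = ∑ m ∈ Finset.range n, ∑ k : Fin d → Fin (K - 1),
      (2 / (K : ℝ)) ^ d * S (sVal K d lam k) ^ (n - 1 - m)
        * (∑ i', eps m i' ω * vVec K d k i') * vVec K d k i)
    (n : ℕ) :
    (∫ ω, ∑ i, E n ω i ^ 2)
      ≤ ε ^ 2 * ∑ k : Fin d → Fin (K - 1), 1 / (1 - S (sVal K d lam k) ^ 2) ∧
    (∫ ω, ((K : ℝ) ^ d)⁻¹ * ∑ i, E n ω i ^ 2)
      ≤ ε ^ 2 * ((K : ℝ) ^ d)⁻¹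
        * ∑ k : Fin d → Fin (K - 1), 1 / (1 - S (sVal K d lam k) ^ 2) := by
  set σ := fun k => S (sVal K d lam k)
  set a := fun k (p : ℕ × (Fin d → Fin (K - 1))) =>
    (2 / (K : ℝ)) ^ d * σ k ^ (n - 1 - p.1) * vVec K d k p.2
  have hexpand : ∀ ω i, E n ω i
      = ∑ k, (∑ p ∈ range n ×ˢ univ, a k p * eps p.1 p.2 ω) * vVec K d k i := by
    intro ω i
    rw [hE, sum_comm]
    refine sum_congr rfl fun k _ => ?_
    simp only [a, sum_product, sum_mul, mul_sum]
    exact sum_congr rfl fun m _ => sum_congr rfl fun i' _ => by ring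
  have hL2 : ∀ p : ℕ × (Fin d → Fin (K - 1)), MemLp (eps p.1 p.2) 2 :=
    fun p => MemLp.of_bound (hmeas _ _).aestronglyMeasurable ε (hbdd _ _)
  have hmain : ∫ ω, ∑ i, E n ω i ^ 2 ≤ ε ^ 2 * ∑ k, 1 / (1 - σ k ^ 2) := by
    simp_rw [hexpand]
    rw [integral_sum_sq_of_orthogonal_of_uncorrelated vVec_orthogonal hL2
      (fun p q hpq => huncorr _ _ _ _ hpq), mul_sum, mul_sum]
    refine sum_le_sum fun k _ => ?_
    calc _ ≤ ((K : ℝ) / 2) ^ d * ∑ p ∈ range n ×ˢ univ, a k p ^ 2 * ε ^ 2 := by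
          gcongr with p
          exact integral_sq_le_sq_of_abs_le (hmeas _ _).aestronglyMeasurable (hbdd _ _)
      _ = ε ^ 2 * ∑ m ∈ range n, (σ k ^ 2) ^ m := by
          rw [← sum_mul, ← half_pow_mul_sum_sq_coeff_eq_geom_sum (by omega) k (σ k) n]
          ring
      _ ≤ ε ^ 2 * (1 / (1 - σ k ^ 2)) := by
          have hσ : σ k ^ 2 < 1 := (sq_lt_one_iff_abs_lt_one _).2 (hS k)
          gcongr
          simpa using geom_sum_Ico_le_of_lt_one (m := 0) (n := n) (sq_nonneg (σ k)) hσ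
  refine ⟨hmain, ?_⟩
  rw [integral_const_mul, mul_comm (ε ^ 2), mul_assoc]
  exact mul_le_mul_of_nonneg_left hmain (by positivity)

/-- Mean-square bound for the stochastic-rounding global
error: if the local rounding errors `ε^m_i` are a.s. bounded by `ε` and
pairwise uncorrelated across distinct `(m, i)`, then
`E[‖E^n‖₂²] ≤ ε² Σ_k 1/(1 − S(s_k)²)`, equivalently
`E[‖E^n‖_{L²}²] ≤ ε² K^{−d} Σ_k 1/(1 − S(s_k)²)`. -/
theorem stochastic_rounding_L2_bound (K d : ℕ) (hK : 2 ≤ K) (hd : 1 ≤ d)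
    (lam : ℝ) (hlam : 0 < lam) (S : ℝ → ℝ)
    (hS : ∀ k : Fin d → Fin (K - 1), |S (sVal K d lam k)| < 1)
    {Ω : Type*} [MeasureSpace Ω] [IsProbabilityMeasure (volume : Measure Ω)]
    (ε : ℝ) (hε : 0 < ε)
    (eps : ℕ → (Fin d → Fin (K - 1)) → Ω → ℝ)
    (hmeas : ∀ m i, Measurable (eps m i))
    (hbdd : ∀ m i, ∀ᵐ ω, |eps m i ω| ≤ ε)
    (huncorr : ∀ m i m' i', (m, i) ≠ (m', i') →
      ∫ ω, eps m i ω * eps m' i' ω = 0)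
    (E : ℕ → Ω → (Fin d → Fin (K - 1)) → ℝ)
    (hE : ∀ n ω i, E n ω i = ∑ m ∈ Finset.range n, ∑ k : Fin d → Fin (K - 1),
      (2 / (K : ℝ)) ^ d * S (sVal K d lam k) ^ (n - 1 - m)
        * (∑ i', eps m i' ω * vVec K d k i') * vVec K d k i)
    (n : ℕ) (hn : 1 ≤ n) :
    (∫ ω, ∑ i, E n ω i ^ 2)
      ≤ ε ^ 2 * ∑ k : Fin d → Fin (K - 1), 1 / (1 - S (sVal K d lam k) ^ 2) ∧
    (∫ ω, ((K : ℝ) ^ d)⁻¹ * ∑ i, E n ω i ^ 2)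
      ≤ ε ^ 2 * ((K : ℝ) ^ d)⁻¹
        * ∑ k : Fin d → Fin (K - 1), 1 / (1 - S (sVal K d lam k) ^ 2) :=
  stochastic_rounding_L2_bound_general K d hK lam S hS ε eps hmeas hbdd huncorr E hE n
end
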